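/- Let d be a positive integer, L_1, …, L_d > 0 real, n_1, …, n_d positive integers, 0 < α < 1, D > 0, and set λ := Σ_{i=1}^d π² n_i² / L_i². Let g : [0, ∞) → ℝ be continuous on [0, t], differentiable on (0, t), with g(0) = 0 and g'(s) > 0 for 0 < s < t. Then the separated function u(x, τ) := (∏_{i=1}^d sin(π n_i x_i / L_i)) · E_α(−λ D g(τ)^α) satisfies the g-fractional diffusion equation at time t: for every x ∈ ℝ^d, (1/Γ(1−α)) ∫_0^t (g(t) − g(τ))^{−α} (∂u/∂τ)(x, τ) dτ = D Σ_{i=1}^d (∂²u/∂x_i²)(x, t); moreover u(x, t) = 0 whenever some coordinate x_i equals 0 or L_i. -/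

import Mathlib

/-!
Since `g` is strictly increasing, the substitution `s = g τ` turns the `g`-Caputo derivative at `t`
into the ordinary Caputo derivative at `T = g t`. Expanding `E_α(c s^α) = Σ c^k s^{αk} / Γ(αk + 1)`,
the Caputo derivative of the `k`-th term is a Beta integral in which `Γ(αk)` cancels, so it becomes
the `(k - 1)`-th term times `c`: the Caputo derivative of `E_α(c s^α)` is `c E_α(c s^α)`. The
termwise integration is justified by `Γ(x) ≥ M^(x-1) e^(-M)`, which dominates the series by a
geometric one. In space, `sin(π n_i x_i / L_i)` is an eigenfunction of `∂²/∂x_i²` with eigenvalue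
`-(π n_i / L_i)²`, so the Laplacian multiplies `u` by `-λ`; with `c = -λ D` both sides agree.
-/

open Real MeasureTheory

/-- The one-parameter Mittag-Leffler function `E_α(x) = Σ_{k=0}^∞ x^k / Γ(α k + 1)`. -/
noncomputable def mittagLeffler (α : ℝ) (x : ℝ) : ℝ :=
  ∑' k : ℕ, x ^ k / Real.Gamma (α * k + 1)

open Set

theorem Real.rpow_sub_one_mul_exp_neg_le_Gamma {x M : ℝ} (hx : 1 ≤ x) (hM : 0 ≤ M) :
    M ^ (x - 1) * exp (-M) ≤ Gamma x := by
  have hint := GammaIntegral_convergent (by linarith : 0 < x)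
  have hnonneg : ∀ t ∈ Ioi (0 : ℝ), 0 ≤ exp (-t) * t ^ (x - 1) := fun t ht =>
    mul_nonneg (exp_pos _).le (rpow_nonneg (le_of_lt ht) _)
  calc M ^ (x - 1) * exp (-M) = ∫ t in Ioi M, exp (-t) * M ^ (x - 1) := by
        rw [integral_mul_const, integral_exp_neg_Ioi, mul_comm]
    _ ≤ ∫ t in Ioi M, exp (-t) * t ^ (x - 1) :=
        setIntegral_mono_on ((integrableOn_exp_neg_Ioi M).mul_const _)
          (hint.mono_set (Ioi_subset_Ioi hM)) measurableSet_Ioi fun t ht =>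
          mul_le_mul_of_nonneg_left (rpow_le_rpow hM (le_of_lt ht) (by linarith)) (exp_pos _).le
    _ ≤ ∫ t in Ioi 0, exp (-t) * t ^ (x - 1) :=
        setIntegral_mono_set hint (ae_restrict_of_forall_mem measurableSet_Ioi hnonneg)
          (Ioi_subset_Ioi hM).eventuallyLE
    _ = Gamma x := (Gamma_eq_integral (by linarith)).symm

theorem summable_pow_div_Gamma {α β : ℝ} (hα : 0 < α) (hβ : 1 ≤ β) (x : ℝ) :
    Summable fun k : ℕ => x ^ k / Gamma (α * k + β) := by
  -- `M ^ α = |x| + 1` makes the bound `Γ(αk + β) ≥ M ^ (αk + β - 1) e^(-M)` geometric in `k`.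
  set M := (|x| + 1) ^ α⁻¹
  have hM : 0 < M := by positivity
  have hMα : M ^ α = |x| + 1 := by
    rw [← rpow_mul (by positivity), inv_mul_cancel₀ hα.ne', rpow_one]
  have hgeom : Summable fun k : ℕ => exp M / M ^ (β - 1) * (|x| / (|x| + 1)) ^ k :=
    (summable_geometric_of_lt_one (by positivity)
      ((div_lt_one (by positivity)).2 (lt_add_one _))).mul_left _
  refine Summable.of_norm_bounded hgeom fun k => ?_
  have hΓ := rpow_sub_one_mul_exp_neg_le_Gamma (x := α * k + β)
    (by nlinarith [k.cast_nonneg (α := ℝ)]) hM.le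
  have hpow : M ^ (α * k + β - 1) = (|x| + 1) ^ k * M ^ (β - 1) := by
    rw [show α * k + β - 1 = α * k + (β - 1) by ring, rpow_add hM, rpow_mul hM.le, hMα,
      rpow_natCast]
  rw [hpow] at hΓ
  have hΓpos : 0 < Gamma (α * k + β) := lt_of_lt_of_le (by positivity) hΓ
  rw [norm_div, norm_pow, Real.norm_eq_abs, Real.norm_of_nonneg hΓpos.le, div_pow,
    div_le_iff₀ hΓpos]
  calc |x| ^ k = exp M / M ^ (β - 1) * (|x| ^ k / (|x| + 1) ^ k) *
        ((|x| + 1) ^ k * M ^ (β - 1) * exp (-M)) := by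
        rw [exp_neg]
        field_simp
    _ ≤ _ := by gcongr

theorem mittagLeffler_eq_one_add {α : ℝ} (hα : 0 < α) (x : ℝ) :
    mittagLeffler α x = 1 + ∑' k : ℕ, x ^ (k + 1) / Gamma (α * (k + 1) + 1) := by
  rw [mittagLeffler, (summable_pow_div_Gamma hα le_rfl x).tsum_eq_zero_add]
  simp

theorem hasDerivAt_mittagLeffler {α : ℝ} (hα : 0 < α) (y : ℝ) :
    HasDerivAt (mittagLeffler α) (∑' k : ℕ, (k + 1) * y ^ k / Gamma (α * (k + 1) + 1)) y := by
  set R := |y| + 1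
  have hshift : ∀ k : ℕ, α * ((k : ℝ) + 1) + 1 = α * k + (α + 1) := fun k => by ring
  have hΓ : ∀ k : ℕ, 0 < Gamma (α * ((k : ℝ) + 1) + 1) := fun k =>
    Gamma_pos_of_pos (by positivity)
  have hbound : ∀ (k : ℕ), ∀ z ∈ Metric.ball y 1, ‖((k : ℝ) + 1) * z ^ k / Gamma (α * (k + 1) + 1)‖
      ≤ (2 * R) ^ k / Gamma (α * k + (α + 1)) := by
    intro k z hz
    have hzR : |z| ≤ R := by
      have := abs_sub_abs_le_abs_sub z y
      rw [Metric.mem_ball, Real.dist_eq] at hz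
      linarith
    have hk : (k : ℝ) + 1 ≤ 2 ^ k := by exact_mod_cast Nat.lt_two_pow_self
    rw [norm_div, norm_mul, norm_pow, Real.norm_of_nonneg (hΓ k).le, ← hshift, mul_pow,
      Real.norm_eq_abs, Real.norm_eq_abs, abs_of_nonneg (by positivity : (0 : ℝ) ≤ k + 1)]
    gcongr
  rw [funext fun x => mittagLeffler_eq_one_add hα x]
  refine (hasDerivAt_tsum_of_isPreconnected
    (summable_pow_div_Gamma hα (le_add_of_nonneg_left hα.le) (2 * R)) Metric.isOpen_ball
    (convex_ball y 1).isPreconnected (fun k z _ => ?_) hbound (Metric.mem_ball_self one_pos) ?_ (Metric.mem_ball_self one_pos)).const_add 1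
  · simpa using (hasDerivAt_pow (k + 1) z).div_const (Gamma (α * (k + 1) + 1))
  · exact_mod_cast (summable_nat_add_iff 1).2 (summable_pow_div_Gamma hα le_rfl y)

theorem hasDerivAt_mittagLeffler_mul_rpow {α : ℝ} (hα : 0 < α) (c : ℝ) {s : ℝ} (hs : 0 < s) :
    HasDerivAt (fun s => mittagLeffler α (c * s ^ α))
      (∑' k : ℕ, c ^ (k + 1) / Gamma (α * (k + 1)) * s ^ (α * (k + 1) - 1)) s := by
  have hchain := (hasDerivAt_mittagLeffler hα (c * s ^ α)).comp s
    ((hasDerivAt_rpow_const (p := α) (Or.inl hs.ne')).const_mul c)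
  refine hchain.congr_deriv ?_
  rw [← tsum_mul_right]
  refine tsum_congr fun k => ?_
  have hak : α * ((k : ℝ) + 1) ≠ 0 := by positivity
  have hpow : s ^ (α * ((k : ℝ) + 1) - 1) = (s ^ α) ^ k * s ^ (α - 1) := by
    rw [← rpow_natCast, ← rpow_mul hs.le, ← rpow_add hs]
    ring_nf
  rw [Gamma_add_one hak, hpow, mul_pow, pow_succ]
  field_simp

theorem integrableOn_rpow_mul_sub_rpow {a b T : ℝ} (ha : 0 < a) (hb : 0 < b) (hT : 0 < T) :
    IntegrableOn (fun s => s ^ (a - 1) * (T - s) ^ (b - 1)) (Ioo 0 T) := by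
  have hleft : ∀ {a b : ℝ}, 0 < a →
      IntervalIntegrable (fun s => s ^ (a - 1) * (T - s) ^ (b - 1)) volume 0 (T / 2) := by
    intro a b ha
    refine (intervalIntegral.intervalIntegrable_rpow' (by linarith)).mul_continuousOn
      ((continuous_const.sub continuous_id).continuousOn.rpow_const fun s hs => Or.inl ?_)
    rw [uIcc_of_le (by linarith)] at hs
    exact (sub_pos.2 (show s < T by linarith [hs.2])).ne'
  have hright :
      IntervalIntegrable (fun s => s ^ (a - 1) * (T - s) ^ (b - 1)) volume (T / 2) T := by
    have h := (hleft (a := b) (b := a) hb).comp_sub_left T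
    rw [sub_zero, show T - T / 2 = T / 2 by ring] at h
    simpa only [sub_sub_cancel, mul_comm] using h.symm
  exact ((intervalIntegrable_iff_integrableOn_Ioo_of_le hT.le).1 ((hleft ha).trans hright))

theorem integral_rpow_mul_sub_rpow {a b T : ℝ} (ha : 0 < a) (hb : 0 < b) (hT : 0 < T) :
    ∫ s in Ioo 0 T, s ^ (a - 1) * (T - s) ^ (b - 1) =
      T ^ (a + b - 1) * (Gamma a * Gamma b / Gamma (a + b)) := by
  have hscaled := Complex.betaIntegral_scaled a b hT
  rw [Complex.betaIntegral_eq_Gamma_mul_div _ _ (by simpa) (by simpa),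
    intervalIntegral.integral_of_le hT.le, integral_Ioc_eq_integral_Ioo] at hscaled
  apply Complex.ofReal_injective
  rw [← integral_complex_ofReal]
  calc ∫ s in Ioo 0 T, ((s ^ (a - 1) * (T - s) ^ (b - 1) : ℝ) : ℂ)
      = ∫ s in Ioo 0 T, (s : ℂ) ^ ((a : ℂ) - 1) * ((T : ℂ) - s) ^ ((b : ℂ) - 1) := by
        refine setIntegral_congr_fun measurableSet_Ioo fun s hs => ?_
        rw [Complex.ofReal_mul, Complex.ofReal_cpow hs.1.le,
          Complex.ofReal_cpow (sub_pos.2 hs.2).le]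
        push_cast
        rfl
    _ = _ := by
        rw [hscaled, ← Complex.ofReal_add, Complex.Gamma_ofReal, Complex.Gamma_ofReal,
          Complex.Gamma_ofReal]
        push_cast [Complex.ofReal_cpow hT.le]
        rfl

/-- `(∂_g^α f)(t)`; `gCaputoDeriv α id` is the Caputo derivative. -/
noncomputable def gCaputoDeriv (α : ℝ) (g f : ℝ → ℝ) (t : ℝ) : ℝ :=
  (1 / Gamma (1 - α)) * ∫ τ in Ioo 0 t, (g t - g τ) ^ (-α) * deriv f τ

theorem gCaputoDeriv_id_mittagLeffler_mul_rpow {α : ℝ} (hα : 0 < α) (hα1 : α < 1) (c : ℝ)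
    {T : ℝ} (hT : 0 < T) :
    gCaputoDeriv α id (fun s => mittagLeffler α (c * s ^ α)) T =
      c * mittagLeffler α (c * T ^ α) := by
  set F : ℝ → ℕ → ℝ → ℝ := fun μ k s =>
    μ ^ (k + 1) / Gamma (α * (k + 1)) * (s ^ (α * (k + 1) - 1) * (T - s) ^ (-α))
  have hΓ1 : 0 < Gamma (1 - α) := Gamma_pos_of_pos (by linarith)
  have hintegrable : ∀ μ k, IntegrableOn (F μ k) (Ioo 0 T) := fun μ k => by
    have h := integrableOn_rpow_mul_sub_rpow (a := α * (k + 1)) (b := 1 - α) (by positivity)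
      (by linarith) hT
    rw [sub_sub_cancel_left] at h
    exact h.const_mul _
  have hintegral : ∀ μ k, ∫ s in Ioo 0 T, F μ k s =
      Gamma (1 - α) * μ * ((μ * T ^ α) ^ k / Gamma (α * k + 1)) := fun μ k => by
    have h := integral_rpow_mul_sub_rpow (a := α * (k + 1)) (b := 1 - α) (by positivity)
      (by linarith) hT
    rw [sub_sub_cancel_left, show α * (k + 1) + (1 - α) = α * k + 1 by ring,
      add_sub_cancel_right, rpow_mul hT.le, rpow_natCast] at h
    have hΓ : 0 < Gamma (α * (k + 1)) := Gamma_pos_of_pos (by positivity)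
    rw [integral_const_mul, h, mul_pow, pow_succ]
    field_simp
  have hnorm : ∀ k, ∫ s in Ioo 0 T, ‖F c k s‖ = ∫ s in Ioo 0 T, F |c| k s := fun k => by
    refine setIntegral_congr_fun measurableSet_Ioo fun s hs => ?_
    have hΓ : 0 < Gamma (α * (k + 1)) := Gamma_pos_of_pos (by positivity)
    simp only [F, norm_mul, norm_div, norm_pow, Real.norm_eq_abs, abs_of_pos hΓ,
      abs_of_nonneg (rpow_nonneg hs.1.le _), abs_of_nonneg (rpow_nonneg (sub_pos.2 hs.2).le _)]
  have hseries : ∀ s ∈ Ioo 0 T, (id T - id s) ^ (-α) *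
      deriv (fun s => mittagLeffler α (c * s ^ α)) s = ∑' k, F c k s := fun s hs => by
    rw [(hasDerivAt_mittagLeffler_mul_rpow hα c hs.1).deriv, ← tsum_mul_left]
    exact tsum_congr fun k => by simp only [F, id]; ring
  have hsummable : Summable fun k => ∫ s in Ioo 0 T, ‖F c k s‖ := by
    simp_rw [hnorm, hintegral]
    exact (summable_pow_div_Gamma hα le_rfl _).mul_left _
  rw [gCaputoDeriv, setIntegral_congr_fun measurableSet_Ioo hseries,
    ← integral_tsum_of_summable_integral_norm (hintegrable c) hsummable]
  simp_rw [hintegral, tsum_mul_left, mittagLeffler]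
  field_simp

theorem gCaputoDeriv_const_mul (α : ℝ) (g f : ℝ → ℝ) (c t : ℝ) :
    gCaputoDeriv α g (fun τ => c * f τ) t = c * gCaputoDeriv α g f t := by
  simp only [gCaputoDeriv, deriv_const_mul_field', mul_left_comm _ c, integral_const_mul]

theorem strictMonoOn_Icc_of_hasDerivAt_pos {g g' : ℝ → ℝ} {a b : ℝ}
    (hgc : ContinuousOn g (Icc a b)) (hgd : ∀ τ ∈ Ioo a b, HasDerivAt g (g' τ) τ)
    (hg' : ∀ τ ∈ Ioo a b, 0 < g' τ) :
    StrictMonoOn g (Icc a b) :=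
  strictMonoOn_of_deriv_pos (convex_Icc a b) hgc fun τ hτ => by
    rw [interior_Icc] at hτ
    exact (hgd τ hτ).deriv ▸ hg' τ hτ

theorem setIntegral_mul_deriv_comp {g g' f H : ℝ → ℝ} {a b : ℝ} (hab : a ≤ b)
    (hgc : ContinuousOn g (Icc a b)) (hgd : ∀ τ ∈ Ioo a b, HasDerivAt g (g' τ) τ)
    (hg' : ∀ τ ∈ Ioo a b, 0 < g' τ) (hf : ∀ s ∈ Ioo (g a) (g b), DifferentiableAt ℝ f s) :
    ∫ τ in Ioo a b, H (g τ) * deriv (fun τ => f (g τ)) τ =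
      ∫ s in Ioo (g a) (g b), H s * deriv f s := by
  have hmono := strictMonoOn_Icc_of_hasDerivAt_pos hgc hgd hg'
  have himage : g '' Ioo a b = Ioo (g a) (g b) := hgc.image_Ioo_of_strictMonoOn hab hmono
  rw [← himage, integral_image_eq_integral_abs_deriv_smul measurableSet_Ioo
    (fun τ hτ => (hgd τ hτ).hasDerivWithinAt) (hmono.injOn.mono Ioo_subset_Icc_self)]
  refine setIntegral_congr_fun measurableSet_Ioo fun τ hτ => ?_
  have hfg : HasDerivAt (fun τ => f (g τ)) (deriv f (g τ) * g' τ) τ :=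
    (hf (g τ) (himage ▸ mem_image_of_mem g hτ)).hasDerivAt.comp τ (hgd τ hτ)
  rw [hfg.deriv, abs_of_pos (hg' τ hτ), smul_eq_mul]
  ring

theorem gCaputoDeriv_comp {α t : ℝ} {g g' f : ℝ → ℝ} (ht : 0 ≤ t)
    (hgc : ContinuousOn g (Icc 0 t)) (hgd : ∀ τ ∈ Ioo 0 t, HasDerivAt g (g' τ) τ)
    (hg' : ∀ τ ∈ Ioo 0 t, 0 < g' τ) (hg0 : g 0 = 0)
    (hf : ∀ s ∈ Ioo 0 (g t), DifferentiableAt ℝ f s) :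
    gCaputoDeriv α g (fun τ => f (g τ)) t = gCaputoDeriv α id f (g t) := by
  rw [← hg0] at hf
  have h := setIntegral_mul_deriv_comp (H := fun s => (g t - s) ^ (-α)) ht hgc hgd hg' hf
  rw [hg0] at h
  exact congrArg _ h

theorem deriv_deriv_sin_mul_div (a b : ℝ) :
    deriv (deriv fun y => sin (a * y / b)) = fun y => -(a / b) ^ 2 * sin (a * y / b) := by
  have hlin : ∀ y, HasDerivAt (fun y => a * y / b) (a / b) y := fun y => by
    simpa using ((hasDerivAt_id y).const_mul a).div_const b
  have hd1 : deriv (fun y => sin (a * y / b)) = fun y => cos (a * y / b) * (a / b) :=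
    funext fun y => ((hlin y).sin).deriv
  funext y
  rw [hd1, (((hlin y).cos).mul_const (a / b)).deriv]
  ring

theorem deriv_deriv_prod_update {ι : Type*} [Fintype ι] [DecidableEq ι] (f : ι → ℝ → ℝ)
    (x : ι → ℝ) (i : ι) {μ : ℝ} (hf : deriv (deriv (f i)) = fun y => -μ * f i y) :
    deriv (deriv fun y => ∏ j, f j (Function.update x i y j)) (x i) = -μ * ∏ j, f j (x j) := by
  have hsplit : ∀ y, ∏ j, f j (Function.update x i y j) =
      f i y * ∏ j ∈ Finset.univ.erase i, f j (x j) := fun y => by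
    rw [← Finset.mul_prod_erase _ _ (Finset.mem_univ i), Function.update_self]
    congr 1
    exact Finset.prod_congr rfl fun j hj => by
      rw [Function.update_of_ne (Finset.ne_of_mem_erase hj)]
  simp only [hsplit, deriv_mul_const_field', hf]
  rw [← Finset.mul_prod_erase _ _ (Finset.mem_univ i)]
  ring

theorem g_fractional_diffusion_rectangle_general (d : ℕ)
    (L : Fin d → ℝ) (hL : ∀ i, 0 < L i)
    (n : Fin d → ℕ)
    (α D t : ℝ) (hα : 0 < α) (hα1 : α < 1) (ht : 0 < t)
    (g g' : ℝ → ℝ)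
    (hgc : ContinuousOn g (Set.Icc 0 t))
    (hgd : ∀ s ∈ Set.Ioo 0 t, HasDerivAt g (g' s) s)
    (hg0 : g 0 = 0)
    (hg' : ∀ s ∈ Set.Ioo 0 t, 0 < g' s)
    (lam : ℝ) (hlam : lam = ∑ i : Fin d, π ^ 2 * (n i : ℝ) ^ 2 / L i ^ 2)
    (u : (Fin d → ℝ) → ℝ → ℝ)
    (hu : u = fun x τ =>
      (∏ j : Fin d, Real.sin (π * n j * x j / L j)) * mittagLeffler α (-(lam * D) * g τ ^ α)) :
    (∀ x : Fin d → ℝ,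
        (1 / Real.Gamma (1 - α)) *
            ∫ τ in Set.Ioo 0 t, (g t - g τ) ^ (-α) * deriv (fun τ => u x τ) τ =
          D * ∑ i : Fin d, deriv (deriv (fun y : ℝ => u (Function.update x i y) t)) (x i)) ∧
    (∀ x : Fin d → ℝ, (∃ i, x i = 0 ∨ x i = L i) → u x t = 0) := by
  subst hu
  refine ⟨fun x => ?_, fun x ⟨i, hi⟩ => ?_⟩
  · have hT : 0 < g t := hg0 ▸ strictMonoOn_Icc_of_hasDerivAt_pos hgc hgd hg'
      (left_mem_Icc.2 ht.le) (right_mem_Icc.2 ht.le) ht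
    have hE : ∀ s ∈ Ioo 0 (g t),
        DifferentiableAt ℝ (fun s => mittagLeffler α (-(lam * D) * s ^ α)) s := fun s hs =>
      (hasDerivAt_mittagLeffler_mul_rpow hα _ hs.1).differentiableAt
    change gCaputoDeriv α g _ t = _
    rw [gCaputoDeriv_const_mul, gCaputoDeriv_comp ht.le hgc hgd hg' hg0 hE,
      gCaputoDeriv_id_mittagLeffler_mul_rpow hα hα1 _ hT]
    simp only [deriv_mul_const_field', deriv_deriv_prod_update (fun j y => sin (π * n j * y / L j))
      x _ (deriv_deriv_sin_mul_div _ _)]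
    rw [hlam, ← Finset.sum_mul, ← Finset.sum_mul, Finset.sum_neg_distrib]
    simp only [div_pow, mul_pow]
    ring
  · refine mul_eq_zero_of_left (Finset.prod_eq_zero (Finset.mem_univ i) ?_) _
    rcases hi with h | h
    · simp [h]
    · rw [h, mul_div_cancel_right₀ _ (hL i).ne', mul_comm]
      exact sin_nat_mul_pi (n i)

/-- On the rectangle with side lengths L_i, with mode numbers n_i,
0 < α < 1, D > 0, λ := Σ_i π² n_i²/L_i², and g continuous on [0,t], differentiable on
(0,t), g(0) = 0, g' > 0 on (0,t), the separated function
u(x, τ) := (∏_i sin(π n_i x_i / L_i)) · E_α(−λ D g(τ)^α)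
satisfies the g-fractional diffusion equation at time t, and vanishes on the boundary. -/
theorem g_fractional_diffusion_rectangle (d : ℕ) (hd : 0 < d)
    (L : Fin d → ℝ) (hL : ∀ i, 0 < L i)
    (n : Fin d → ℕ) (hn : ∀ i, 0 < n i)
    (α D t : ℝ) (hα : 0 < α) (hα1 : α < 1) (hD : 0 < D) (ht : 0 < t)
    (g g' : ℝ → ℝ)
    (hgc : ContinuousOn g (Set.Icc 0 t))
    (hgd : ∀ s ∈ Set.Ioo 0 t, HasDerivAt g (g' s) s)
    (hg0 : g 0 = 0)
    (hg' : ∀ s ∈ Set.Ioo 0 t, 0 < g' s)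
    (lam : ℝ) (hlam : lam = ∑ i : Fin d, π ^ 2 * (n i : ℝ) ^ 2 / L i ^ 2)
    (u : (Fin d → ℝ) → ℝ → ℝ)
    (hu : u = fun x τ =>
      (∏ j : Fin d, Real.sin (π * n j * x j / L j)) * mittagLeffler α (-(lam * D) * g τ ^ α)) :
    (∀ x : Fin d → ℝ,
        (1 / Real.Gamma (1 - α)) *
            ∫ τ in Set.Ioo 0 t, (g t - g τ) ^ (-α) * deriv (fun τ => u x τ) τ =
          D * ∑ i : Fin d, deriv (deriv (fun y : ℝ => u (Function.update x i y) t)) (x i)) ∧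
    (∀ x : Fin d → ℝ, (∃ i, x i = 0 ∨ x i = L i) → u x t = 0) :=
  g_fractional_diffusion_rectangle_general d L hL n α D t hα hα1 ht g g' hgc hgd hg0 hg' lam hlam u
    hu
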